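/- Let A be a real m × n matrix with all rows nonzero and smallest singular value σ_min(A) > 0, and let b ∈ ℝᵐ, x* ∈ ℝⁿ satisfy A x* = b. Consider the randomized Kaczmarz method: starting from x₀ ∈ ℝⁿ, at each step an index i ∈ {1,…,m} is drawn independently with probability ‖a_i‖₂²/‖A‖_F² and x_{k+1} = x_k - ((⟨a_i, x_k⟩ - b_i)/‖a_i‖₂²) · a_i. Then for every k ≥ 0, the expectation over the k independent row choices satisfies 𝔼‖x* - x_k‖₂² ≤ (1 - κ_F(A)⁻²)ᵏ · ‖x* - x₀‖₂², where κ_F(A) = ‖A‖_F/σ_min(A). Equivalently, ∑_{(i₁,…,i_k)} p_{i₁}⋯p_{i_k} ‖x* - T_{i_k}(⋯T_{i₁}(x₀)⋯)‖₂² ≤ (1 - κ_F(A)⁻²)ᵏ ‖x* - x₀‖₂², where p_i = ‖a_i‖₂²/‖A‖_F² and T_i(x) = x - ((⟨a_i, x⟩ - b_i)/‖a_i‖₂²) · a_i. -/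

import Mathlib

/-- The Euclidean norm on `Fin n → ℝ`. -/
noncomputable def eucNorm {n : ℕ} (x : Fin n → ℝ) : ℝ :=
  Real.sqrt (∑ i, (x i) ^ 2)

/-- The Frobenius norm of a real matrix. -/
noncomputable def frob {m n : ℕ} (A : Matrix (Fin m) (Fin n) ℝ) : ℝ :=
  Real.sqrt (∑ i, ∑ j, (A i j) ^ 2)

/-- The smallest singular value of a real matrix, as the infimum of `‖A x‖` over
unit vectors `x`. -/
noncomputable def sigmaMin {m n : ℕ} (A : Matrix (Fin m) (Fin n) ℝ) : ℝ :=
  sInf ((fun x => eucNorm (A.mulVec x)) '' {x : Fin n → ℝ | eucNorm x = 1})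

lemma enorm_nonneg' {n : ℕ} (x : Fin n → ℝ) : 0 ≤ eucNorm x := Real.sqrt_nonneg _

lemma enorm_sq' {n : ℕ} (x : Fin n → ℝ) : (eucNorm x) ^ 2 = ∑ i, (x i) ^ 2 :=
  Real.sq_sqrt (Finset.sum_nonneg fun i _ => sq_nonneg _)

lemma frob_sq {m n : ℕ} (A : Matrix (Fin m) (Fin n) ℝ) :
    (frob A) ^ 2 = ∑ i, (eucNorm (A i)) ^ 2 := by
  rw [frob, Real.sq_sqrt (by positivity)]
  simp [enorm_sq']

lemma row_sq_pos {m n : ℕ} (A : Matrix (Fin m) (Fin n) ℝ) (i : Fin m) (h : A i ≠ 0) :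
    0 < (eucNorm (A i)) ^ 2 := by
  rw [enorm_sq']
  obtain ⟨j, hj⟩ := Function.ne_iff.mp h
  exact Finset.sum_pos' (fun j _ => sq_nonneg _)
    ⟨j, Finset.mem_univ j, lt_of_le_of_ne (sq_nonneg _) (Ne.symm (pow_ne_zero 2 hj))⟩

lemma enorm_eq_zero_iff {n : ℕ} (x : Fin n → ℝ) : eucNorm x = 0 ↔ x = 0 := by
  rw [eucNorm, Real.sqrt_eq_zero (by positivity)]
  constructor
  · intro h
    funext i
    have := (Finset.sum_eq_zero_iff_of_nonneg fun i _ => sq_nonneg (x i)).mp h i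
      (Finset.mem_univ i)
    exact pow_eq_zero_iff (two_ne_zero) |>.mp this
  · rintro rfl; simp

lemma enorm_smul' {n : ℕ} (c : ℝ) (x : Fin n → ℝ) : eucNorm (c • x) = |c| * eucNorm x := by
  rw [eucNorm, eucNorm]
  simp only [Pi.smul_apply, smul_eq_mul, mul_pow]
  rw [← Finset.mul_sum, Real.sqrt_mul (sq_nonneg c), Real.sqrt_sq_eq_abs]

noncomputable def unitVec {n : ℕ} (j : Fin n) : Fin n → ℝ := fun i => if i = j then 1 else 0

lemma enorm_single {n : ℕ} (j : Fin n) : eucNorm (unitVec j) = 1 := by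
  rw [eucNorm]
  have h : ∑ i, (unitVec j i) ^ 2 = 1 := by
    rw [Finset.sum_eq_single j]
    · simp [unitVec]
    · intro i _ hij; simp [unitVec, hij]
    · intro h; exact absurd (Finset.mem_univ j) h
  rw [h, Real.sqrt_one]

lemma sigmaMin_bddBelow {m n : ℕ} (A : Matrix (Fin m) (Fin n) ℝ) :
    BddBelow ((fun x => eucNorm (A.mulVec x)) '' {x : Fin n → ℝ | eucNorm x = 1}) := by
  refine ⟨0, ?_⟩
  rintro y ⟨x, _, rfl⟩
  exact enorm_nonneg' _

lemma dims_pos {m n : ℕ} (A : Matrix (Fin m) (Fin n) ℝ) (hσ : 0 < sigmaMin A) :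
    0 < m ∧ 0 < n := by
  have hn : 0 < n := by
    rcases Nat.eq_zero_or_pos n with hn | hn
    · exfalso
      subst hn
      have hset : {x : Fin 0 → ℝ | eucNorm x = 1} = ∅ := by
        ext x
        simp [eucNorm]
      rw [sigmaMin, hset] at hσ
      simp [Real.sInf_empty] at hσ
    · exact hn
  refine ⟨?_, hn⟩
  rcases Nat.eq_zero_or_pos m with hm | hm
  · exfalso
    subst hm
    have h0 : sigmaMin A ≤ 0 := by
      apply csInf_le (sigmaMin_bddBelow A)
      refine ⟨unitVec ⟨0, hn⟩, enorm_single _, ?_⟩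
      simp [eucNorm]
    linarith
  · exact hm

lemma sig_mul_le {m n : ℕ} (A : Matrix (Fin m) (Fin n) ℝ) (hσ : 0 < sigmaMin A)
    (e : Fin n → ℝ) :
    sigmaMin A ^ 2 * (eucNorm e) ^ 2 ≤ (eucNorm (A.mulVec e)) ^ 2 := by
  by_cases he : e = 0
  · subst he
    simp [Matrix.mulVec_zero, eucNorm]
  · have ht : 0 < eucNorm e := by
      rcases lt_or_eq_of_le (enorm_nonneg' e) with h | h
      · exact h
      · exact absurd ((enorm_eq_zero_iff e).mp h.symm) he
    set t := eucNorm e with htdef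
    have hu : eucNorm (t⁻¹ • e) = 1 := by
      rw [enorm_smul', abs_of_pos (inv_pos.mpr ht), inv_mul_cancel₀ ht.ne']
    have hle : sigmaMin A ≤ eucNorm (A.mulVec (t⁻¹ • e)) :=
      csInf_le (sigmaMin_bddBelow A) ⟨t⁻¹ • e, hu, rfl⟩
    rw [Matrix.mulVec_smul, enorm_smul', abs_of_pos (inv_pos.mpr ht)] at hle
    have h2 : sigmaMin A * t ≤ eucNorm (A.mulVec e) := by
      rw [← div_eq_inv_mul] at hle
      exact (le_div_iff₀ ht).mp hle
    calc sigmaMin A ^ 2 * t ^ 2 = (sigmaMin A * t) ^ 2 := by ring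
      _ ≤ (eucNorm (A.mulVec e)) ^ 2 := by
          apply pow_le_pow_left₀ (by positivity) h2

lemma sig_le_frob_sq {m n : ℕ} (A : Matrix (Fin m) (Fin n) ℝ) (hσ : 0 < sigmaMin A) :
    sigmaMin A ^ 2 ≤ frob A ^ 2 := by
  obtain ⟨hm, hn⟩ := dims_pos A hσ
  set u : Fin n → ℝ := unitVec ⟨0, hn⟩ with hu
  have hu1 : eucNorm u = 1 := enorm_single _
  have h1 : sigmaMin A ^ 2 * (eucNorm u) ^ 2 ≤ (eucNorm (A.mulVec u)) ^ 2 :=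
    sig_mul_le A hσ u
  rw [hu1, one_pow, mul_one] at h1
  refine h1.trans ?_
  rw [enorm_sq', frob_sq]
  apply Finset.sum_le_sum
  intro i _
  have hcs := Finset.sum_mul_sq_le_sq_mul_sq Finset.univ (fun j => A i j) (fun j => u j)
  have hu2 : ∑ j, (u j) ^ 2 = 1 := by
    have := enorm_sq' u
    rw [hu1] at this
    simpa using this.symm
  have : (A.mulVec u) i = ∑ j, A i j * u j := by
    simp [Matrix.mulVec, dotProduct]
  rw [this, enorm_sq']
  calc (∑ j, A i j * u j) ^ 2 ≤ (∑ j, (A i j) ^ 2) * ∑ j, (u j) ^ 2 := hcs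
    _ = ∑ j, (A i j) ^ 2 := by rw [hu2, mul_one]

lemma onestep {m n : ℕ} (A : Matrix (Fin m) (Fin n) ℝ)
    (hrows : ∀ i, A i ≠ 0) (hσ : 0 < sigmaMin A)
    (b : Fin m → ℝ) (xstar : Fin n → ℝ) (hsol : A.mulVec xstar = b)
    (x : Fin n → ℝ) :
    ∑ i, (eucNorm (A i)) ^ 2 / (frob A) ^ 2 *
        (eucNorm (xstar - (x - (((∑ j, A i j * x j) - b i) / (eucNorm (A i)) ^ 2) • A i))) ^ 2
      ≤ (1 - ((frob A / sigmaMin A) ^ 2)⁻¹) * (eucNorm (xstar - x)) ^ 2 := by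
  obtain ⟨hm, hn⟩ := dims_pos A hσ
  have hF : 0 < frob A ^ 2 := by
    rw [frob_sq]
    exact Finset.sum_pos (fun i _ => row_sq_pos A i (hrows i))
      (Finset.univ_nonempty_iff.mpr ⟨⟨0, hm⟩⟩)
  set e : Fin n → ℝ := xstar - x with he
  set d : Fin m → ℝ := A.mulVec e with hd
  have hdi : ∀ i, d i = ∑ j, A i j * e j := by
    intro i
    simp [hd, Matrix.mulVec, dotProduct]
  set E : ℝ := ∑ j, (e j) ^ 2 with hE
  -- rewrite each term
  have hterm : ∀ i : Fin m,
      (eucNorm (A i)) ^ 2 / (frob A) ^ 2 *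
        (eucNorm (xstar - (x - (((∑ j, A i j * x j) - b i) / (eucNorm (A i)) ^ 2) • A i))) ^ 2
      = ((eucNorm (A i)) ^ 2 * E - (d i) ^ 2) / (frob A) ^ 2 := by
    intro i
    have hr : 0 < (eucNorm (A i)) ^ 2 := row_sq_pos A i (hrows i)
    have hbi : b i = ∑ j, A i j * xstar j := by
      rw [← hsol]; simp [Matrix.mulVec, dotProduct]
    have hej : ∀ j, e j = xstar j - x j := fun j => rfl
    have hsub : (∑ j, A i j * x j) - b i = -(d i) := by
      rw [hbi, hdi i, ← Finset.sum_sub_distrib, ← Finset.sum_neg_distrib]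
      apply Finset.sum_congr rfl
      intro j _
      rw [hej j]
      ring
    set t : ℝ := ((∑ j, A i j * x j) - b i) / (eucNorm (A i)) ^ 2 with htd
    have hpt : (eucNorm (xstar - (x - t • A i))) ^ 2
        = ∑ j, (e j + t * A i j) ^ 2 := by
      rw [enorm_sq']
      apply Finset.sum_congr rfl
      intro j _
      simp only [Pi.sub_apply, Pi.smul_apply, smul_eq_mul]
      rw [hej j]
      ring
    have hexp : ∑ j, (e j + t * A i j) ^ 2
        = E + 2 * t * (d i) + t ^ 2 * (eucNorm (A i)) ^ 2 := by
      rw [hE, hdi i, enorm_sq', Finset.mul_sum, Finset.mul_sum,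
        ← Finset.sum_add_distrib, ← Finset.sum_add_distrib]
      apply Finset.sum_congr rfl
      intro j _
      ring
    rw [hpt, hexp, htd, hsub]
    have hA0 : eucNorm (A i) ≠ 0 := fun h => by simp [h] at hr
    have hF0 : frob A ≠ 0 := fun h => by simp [h] at hF
    field_simp
    ring
  rw [Finset.sum_congr rfl fun i _ => hterm i]
  rw [← Finset.sum_div, Finset.sum_sub_distrib, ← Finset.sum_mul, ← frob_sq]
  -- now goal : (frob A ^2 * E - ∑ d i ^2) / frob A ^2 ≤ (1 - σ²/F²) * E
  have hsig : sigmaMin A ^ 2 * E ≤ ∑ i, (d i) ^ 2 := by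
    have := sig_mul_le A hσ e
    rwa [enorm_sq', enorm_sq', ← hE, ← hd] at this
  have hinv : ((frob A / sigmaMin A) ^ 2)⁻¹ = sigmaMin A ^ 2 / frob A ^ 2 := by
    rw [div_pow, inv_div]
  rw [hinv, div_le_iff₀ hF]
  have hexpand : (1 - sigmaMin A ^ 2 / frob A ^ 2) * E * frob A ^ 2
      = frob A ^ 2 * E - sigmaMin A ^ 2 * E := by
    have hF0 : frob A ≠ 0 := fun h => by simp [h] at hF
    field_simp
  rw [enorm_sq', ← hE, hexpand]
  linarith [hsig]

/-- Strohmer–Vershynin convergence theorem for the randomized Kaczmarz method: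
with row probabilities `pᵢ = ‖aᵢ‖²/‖A‖_F²` and Kaczmarz steps
`Tᵢ(x) = x - ((⟨aᵢ, x⟩ - bᵢ)/‖aᵢ‖²) • aᵢ`, the expectation over `k` independent row
choices (a sum over index sequences of length `k`) satisfies
`𝔼‖x* - x_k‖² ≤ (1 - κ_F(A)⁻²)ᵏ ‖x* - x₀‖²` with `κ_F(A) = ‖A‖_F/σ_min(A)`. -/
theorem rkm_convergence {m n : ℕ} (A : Matrix (Fin m) (Fin n) ℝ)
    (hrows : ∀ i, A i ≠ 0) (hσ : 0 < sigmaMin A)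
    (b : Fin m → ℝ) (xstar : Fin n → ℝ) (hsol : A.mulVec xstar = b)
    (x₀ : Fin n → ℝ) (k : ℕ) :
    ∑ seq : Fin k → Fin m,
        (∏ j, (eucNorm (A (seq j))) ^ 2 / (frob A) ^ 2) *
          (eucNorm (xstar -
            (List.ofFn seq).foldl
              (fun x i => x - (((∑ j, A i j * x j) - b i) / (eucNorm (A i)) ^ 2) • A i)
              x₀)) ^ 2
      ≤ (1 - ((frob A / sigmaMin A) ^ 2)⁻¹) ^ k * (eucNorm (xstar - x₀)) ^ 2 := by
  obtain ⟨hm, hn⟩ := dims_pos A hσ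
  have hF : 0 < frob A ^ 2 := by
    rw [frob_sq]
    exact Finset.sum_pos (fun i _ => row_sq_pos A i (hrows i))
      (Finset.univ_nonempty_iff.mpr ⟨⟨0, hm⟩⟩)
  set c : ℝ := 1 - ((frob A / sigmaMin A) ^ 2)⁻¹ with hc
  have hc0 : 0 ≤ c := by
    rw [hc, div_pow, inv_div, sub_nonneg, div_le_one hF]
    exact sig_le_frob_sq A hσ
  induction k generalizing x₀ with
  | zero => simp
  | succ k ih =>
    rw [← Equiv.sum_comp (Fin.consEquiv (fun _ : Fin (k + 1) => Fin m)), Fintype.sum_prod_type]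
    simp only [Fin.consEquiv_apply, Fin.prod_univ_succ, Fin.cons_zero,
      Fin.cons_succ, List.ofFn_succ, List.foldl_cons]
    set T : (Fin n → ℝ) → Fin m → (Fin n → ℝ) :=
      fun x i => x - (((∑ j, A i j * x j) - b i) / (eucNorm (A i)) ^ 2) • A i with hT
    have pnn : ∀ i : Fin m, 0 ≤ (eucNorm (A i)) ^ 2 / (frob A) ^ 2 :=
      fun i => by positivity
    calc ∑ i : Fin m, ∑ f : Fin k → Fin m,
          ((eucNorm (A i)) ^ 2 / (frob A) ^ 2 * ∏ j, (eucNorm (A (f j))) ^ 2 / (frob A) ^ 2) *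
            (eucNorm (xstar - (List.ofFn f).foldl T (T x₀ i))) ^ 2
        = ∑ i : Fin m, (eucNorm (A i)) ^ 2 / (frob A) ^ 2 *
            ∑ f : Fin k → Fin m, (∏ j, (eucNorm (A (f j))) ^ 2 / (frob A) ^ 2) *
              (eucNorm (xstar - (List.ofFn f).foldl T (T x₀ i))) ^ 2 := by
          apply Finset.sum_congr rfl
          intro i _
          rw [Finset.mul_sum]
          apply Finset.sum_congr rfl
          intro f _
          ring
      _ ≤ ∑ i : Fin m, (eucNorm (A i)) ^ 2 / (frob A) ^ 2 *
            (c ^ k * (eucNorm (xstar - T x₀ i)) ^ 2) := by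
          apply Finset.sum_le_sum
          intro i _
          exact mul_le_mul_of_nonneg_left (ih (T x₀ i)) (pnn i)
      _ = c ^ k * ∑ i : Fin m, (eucNorm (A i)) ^ 2 / (frob A) ^ 2 *
            (eucNorm (xstar - T x₀ i)) ^ 2 := by
          rw [Finset.mul_sum]
          apply Finset.sum_congr rfl
          intro i _
          ring
      _ ≤ c ^ k * (c * (eucNorm (xstar - x₀)) ^ 2) := by
          apply mul_le_mul_of_nonneg_left _ (pow_nonneg hc0 k)
          exact onestep A hrows hσ b xstar hsol x₀
      _ = c ^ (k + 1) * (eucNorm (xstar - x₀)) ^ 2 := by ring
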